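/- Let σ: 𝒜* → ℬ* be a non-erasing morphism of free monoids over finite alphabets and let X ⊆ 𝒜^ℤ be a subshift. If σ is recognizable in X, then the measure transfer map σ^ℳ_X: ℳ(X) → ℳ(σ(X)) is injective. -/

import Mathlib

open MeasureTheory Filter
open scoped ENNReal

namespace SAdicPaper

universe u v

/-- Biinfinite words over the alphabet `A`. -/
def ZWord (A : Type u) : Type u := ℤ → A

noncomputable instance {A : Type u} : TopologicalSpace (ZWord A) :=
  @Pi.topologicalSpace ℤ (fun _ => A) (fun _ => ⊥)

instance {A : Type u} : MeasurableSpace (ZWord A) :=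
  @MeasurableSpace.pi ℤ (fun _ => A) (fun _ => ⊤)

instance finAddTwoNonempty (n : ℕ) : Nonempty (Fin (n + 2)) := ⟨⟨0, by omega⟩⟩

variable {A : Type u} {B : Type v}

/-- The shift map `T`. -/
def shift (x : ZWord A) : ZWord A := fun i => x (i + 1)

/-- Shift by an arbitrary integer amount. -/
def shiftBy (m : ℤ) (x : ZWord A) : ZWord A := fun i => x (i + m)

/-- A subshift: a non-empty, closed, shift-invariant set of biinfinite words. -/
def IsSubshift (X : Set (ZWord A)) : Prop :=
  X.Nonempty ∧ IsClosed X ∧ shift '' X = X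

/-- The finite subword of `x` of length `n` starting at position `k`. -/
def subword (x : ZWord A) (k : ℤ) (n : ℕ) : List A :=
  (List.range n).map fun i => x (k + i)

/-- The language of finite factors of elements of `X`. -/
def lang (X : Set (ZWord A)) : Set (List A) :=
  { w | ∃ x ∈ X, ∃ k : ℤ, w = subword x k w.length }

/-- The subshift generated by a language. -/
def subshiftGen (L : Set (List A)) : Set (ZWord A) :=
  { x | ∀ (k : ℤ) (n : ℕ), ∃ u ∈ L, subword x k n <:+: u }

/-- Extension of a letter map `σ : A → List B` to words: the free monoid morphism. -/
def wordMap (σ : A → List B) (w : List A) : List B := (w.map σ).flatten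

/-- A morphism is non-erasing if no letter is mapped to the empty word. -/
def NonErasing (σ : A → List B) : Prop := ∀ a, σ a ≠ []

/-- The image subshift `σ(X)`. -/
def imageSubshift (σ : A → List B) (X : Set (ZWord A)) : Set (ZWord B) :=
  subshiftGen (wordMap σ '' lang X)

/-- The position at which the `σ`-image of the letter of `x` at index `n` starts
(the image of the letter at index 1 starts at index 1). -/
noncomputable def offset (σ : A → List B) (x : ZWord A) (n : ℤ) : ℤ :=
  if 1 ≤ n then 1 + ∑ i ∈ Finset.Ico (1 : ℤ) n, ((σ (x i)).length : ℤ)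
  else 1 - ∑ i ∈ Finset.Ico n (1 : ℤ), ((σ (x i)).length : ℤ)

/-- The induced map `σ^ℤ` on biinfinite words. -/
noncomputable def sigmaZ [Nonempty B] (σ : A → List B) (x : ZWord A) : ZWord B := fun j =>
  let n := Classical.epsilon fun n : ℤ => offset σ x n ≤ j ∧ j < offset σ x (n + 1)
  (σ (x n)).getD (j - offset σ x n).toNat (Classical.arbitrary B)

/-- The cylinder `[w]`: biinfinite words `x` with `x₁ ⋯ x_{|w|} = w`. -/
def cylinder (w : List A) : Set (ZWord A) :=
  { x | ∀ i : Fin w.length, x (((i : ℕ) : ℤ) + 1) = w.get i }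

/-- Shift-invariance of a measure. -/
def ShiftInvariantM (μ : Measure (ZWord A)) : Prop :=
  ∀ S : Set (ZWord A), MeasurableSet S → μ (shift ⁻¹' S) = μ S

/-- The cone `ℳ(X)` of shift-invariant finite Borel measures supported in `X`. -/
def measureCone (X : Set (ZWord A)) : Set (Measure (ZWord A)) :=
  { μ | μ Set.univ ≠ ⊤ ∧ ShiftInvariantM μ ∧ μ Xᶜ = 0 }

/-- The subdivision alphabet `𝒜_σ`. -/
def SubAlph (σ : A → List B) : Type u := Σ a : A, Fin (σ a).length

/-- The subdivision morphism `π_σ`. -/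
def subdivMap (σ : A → List B) : A → List (SubAlph σ) :=
  fun a => (List.finRange (σ a).length).map fun k => ⟨a, k⟩

/-- The letter-to-letter map `α_σ` on letters. -/
def letterMap (σ : A → List B) : SubAlph σ → B := fun p => (σ p.1).get p.2

/-- The letter-to-letter morphism `α_σ`. -/
def alphaMap (σ : A → List B) : SubAlph σ → List B := fun p => [letterMap σ p]

/-- The map `α_σ^ℤ` on biinfinite words. -/
def alphaZ (σ : A → List B) : ZWord (SubAlph σ) → ZWord B := fun y i => letterMap σ (y i)

/-- The measure transfer map `σ^ℳ`: the push-forward under `α_σ` of the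
subdivision measure `μ^{π_σ}` (realized concretely on the subdivision full shift). -/
noncomputable def transfer (σ : A → List B) (μ : Measure (ZWord A)) : Measure (ZWord B) :=
  letI := Classical.propDecidable (Nonempty (SubAlph σ))
  if h : Nonempty (SubAlph σ) then
    haveI := h
    Measure.map (alphaZ σ)
      (Measure.sum fun k : ℕ =>
        Measure.map (fun x => shift^[k] (sigmaZ (subdivMap σ) x))
          (μ.restrict { x | k < (σ (x 1)).length }))
  else 0

/-- Recognizability of `σ` in a subshift `X`. -/
def Recognizable [Nonempty B] (σ : A → List B) (X : Set (ZWord A)) : Prop :=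
  ∀ x ∈ X, ∀ x' ∈ X, ∀ k l : ℕ,
    k < (σ (x 1)).length → l < (σ (x' 1)).length →
    shift^[k] (sigmaZ σ x) = shift^[l] (sigmaZ σ x') → x = x' ∧ k = l

/-- `x` and `y` lie in the same shift-orbit. -/
def sameOrbit (x y : ZWord A) : Prop := ∃ m : ℤ, y = shiftBy m x

/-- `σ` is shift-orbit injective in `X`. -/
def ShiftOrbitInjective [Nonempty B] (σ : A → List B) (X : Set (ZWord A)) : Prop :=
  ∀ x ∈ X, ∀ y ∈ X, (sameOrbit (sigmaZ σ x) (sigmaZ σ y) ↔ sameOrbit x y)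

/-- The periodic biinfinite word `w^{±∞}`. -/
def periodicWord (w : List A) (h : w ≠ []) : ZWord A := fun i =>
  w.get ⟨(i % (w.length : ℤ)).toNat, by
    have hl : 0 < w.length := by cases w with | nil => exact absurd rfl h | cons a t => simp
    have h1 : 0 ≤ i % (w.length : ℤ) := Int.emod_nonneg i (by exact_mod_cast hl.ne')
    have h2 : i % (w.length : ℤ) < (w.length : ℤ) := Int.emod_lt_of_pos i (by exact_mod_cast hl)
    omega⟩

/-- A word is a proper power if `w = u^m` for some `m ≥ 2`. -/
def IsProperPower (w : List A) : Prop :=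
  ∃ (u : List A) (m : ℕ), 2 ≤ m ∧ w = (List.replicate m u).flatten

/-- `σ` is shift-period preserving in `X`. -/
def ShiftPeriodPreserving (σ : A → List B) (X : Set (ZWord A)) : Prop :=
  ∀ (w : List A) (h : w ≠ []), periodicWord w h ∈ X →
    (IsProperPower w ↔ IsProperPower (wordMap σ w))

/-- The incidence matrix `M(σ)` of a morphism. -/
noncomputable def incidence (σ : A → List B) : Matrix B A ℝ :=
  letI := Classical.decEq B
  Matrix.of fun b a => ((σ a).count b : ℝ)

/-- The number `|u|_w` of occurrences of `w` as a factor of `u`. -/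
noncomputable def occ (w u : List A) : ℕ :=
  letI := Classical.decEq A
  ((List.range (u.length + 1)).filter fun i => decide ((u.drop i).take w.length = w)).length

/-- A minimal subshift. -/
def IsMinimalSubshift (X : Set (ZWord A)) : Prop :=
  IsSubshift X ∧ ∀ Y, Y ⊆ X → IsSubshift Y → Y = X

/-- A shift-invariant probability measure. -/
def IsProbInvariant (μ : Measure (ZWord A)) : Prop :=
  ShiftInvariantM μ ∧ μ Set.univ = 1

/-- An ergodic shift-invariant probability measure: not a positive linear combination
of two distinct shift-invariant probability measures. -/
def IsErgodicMeasure (μ : Measure (ZWord A)) : Prop :=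
  IsProbInvariant μ ∧
    ∀ ν₁ ν₂ : Measure (ZWord A), IsProbInvariant ν₁ → IsProbInvariant ν₂ →
      ∀ c₁ c₂ : ℝ≥0∞, 0 < c₁ → 0 < c₂ → μ = c₁ • ν₁ + c₂ • ν₂ → ν₁ = ν₂

/-- Aperiodicity: no shift-periodic word in `X`. -/
def Aperiodic (X : Set (ZWord A)) : Prop :=
  ∀ x ∈ X, ∀ p : ℕ, 0 < p → shift^[p] x ≠ x

/-- Unique ergodicity of a subshift `X`. -/
def UniquelyErgodic (X : Set (ZWord A)) : Prop :=
  ∃! μ : Measure (ZWord A), IsErgodicMeasure μ ∧ μ ∈ measureCone X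

/-- The complexity function `p_X(n)`. -/
noncomputable def complexity (X : Set (ZWord A)) (n : ℕ) : ℕ :=
  Set.ncard { w : List A | w ∈ lang X ∧ w.length = n }

/-- The letter frequency vector of a measure. -/
noncomputable def freqMap (μ : Measure (ZWord A)) : A → ℝ := fun a => (μ (cylinder [a])).toReal

/-- The letter frequency cone `𝒞(X)`. -/
def letterFreqCone (X : Set (ZWord A)) : Set (A → ℝ) := freqMap '' measureCone X

/-- A primitive substitution: some power of the incidence matrix is positive. -/
def Primitive (τ : A → List A) : Prop :=
  ∃ p : ℕ, 0 < p ∧ ∀ a b : A, b ∈ (wordMap τ)^[p] [a]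

/-- The substitutive subshift of a substitution. -/
def substitutiveSubshift (τ : A → List A) : Set (ZWord A) :=
  { x | ∀ (k : ℤ) (m : ℕ), ∃ (p : ℕ) (a : A), 1 ≤ p ∧ subword x k m <:+: (wordMap τ)^[p] [a] }

section Directive

variable {𝒜 : ℕ → Type u}

/-- The telescoped morphism `σ_{[0,n)}`, on letters. -/
def teleW (σ : ∀ n, 𝒜 (n+1) → List (𝒜 n)) : (n : ℕ) → 𝒜 n → List (𝒜 0)
  | 0, a => [a]
  | n+1, a => wordMap (teleW σ n) (σ n a)

/-- The telescoped morphism `σ_{[k,k+m)}`, on letters. -/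
def teleWFrom (σ : ∀ n, 𝒜 (n+1) → List (𝒜 n)) (k : ℕ) : (m : ℕ) → 𝒜 (k + m) → List (𝒜 k)
  | 0, a => [a]
  | m+1, a => wordMap (teleWFrom σ k m) (σ (k + m) a)

/-- An everywhere growing directive sequence. -/
def EverywhereGrowing (σ : ∀ n, 𝒜 (n+1) → List (𝒜 n)) : Prop :=
  ∀ N : ℕ, ∃ n₀ : ℕ, ∀ n, n₀ ≤ n → ∀ a : 𝒜 n, N ≤ (teleW σ n a).length

/-- The subshift generated by a directive sequence. -/
def genSubshift (σ : ∀ n, 𝒜 (n+1) → List (𝒜 n)) : Set (ZWord (𝒜 0)) :=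
  { x | ∀ (k : ℤ) (m : ℕ), ∃ n : ℕ, 1 ≤ n ∧ ∃ a : 𝒜 n, subword x k m <:+: teleW σ n a }

/-- The level-`k` subshift of a directive sequence. -/
def levelSubshift (σ : ∀ n, 𝒜 (n+1) → List (𝒜 n)) (k : ℕ) : Set (ZWord (𝒜 k)) :=
  genSubshift (𝒜 := fun n => 𝒜 (k + n)) (fun n => σ (k + n))

/-- A vector tower on a directive sequence. -/
def IsVectorTower [∀ n, Fintype (𝒜 n)] (σ : ∀ n, 𝒜 (n+1) → List (𝒜 n))
    (v : ∀ n, 𝒜 n → ℝ) : Prop :=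
  (∀ n a, 0 ≤ v n a) ∧ ∀ n, v n = (incidence (σ n)).mulVec (v (n+1))

/-- `μ = 𝔪(v)` is the invariant measure on the generated subshift obtained by
evaluating the vector tower `v`. -/
def IsTowerMeasure [∀ n, Fintype (𝒜 n)] (σ : ∀ n, 𝒜 (n+1) → List (𝒜 n))
    (v : ∀ n, 𝒜 n → ℝ) (μ : Measure (ZWord (𝒜 0))) : Prop :=
  μ ∈ measureCone (genSubshift σ) ∧
    ∀ w : List (𝒜 0),
      Tendsto (fun n => ∑ a : 𝒜 n, v n a * (occ w (teleW σ n a) : ℝ)) atTop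
        (nhds ((μ (cylinder w)).toReal))

/-- A measure tower on a directive sequence. -/
def IsMeasureTower (σ : ∀ n, 𝒜 (n+1) → List (𝒜 n))
    (μs : ∀ n, Measure (ZWord (𝒜 n))) : Prop :=
  (∀ n, μs n ∈ measureCone (Set.univ : Set (ZWord (𝒜 n)))) ∧
    ∀ n, μs n = transfer (σ n) (μs (n+1))

/-- The intermediate letter frequency cone `𝒞_n`. -/
def freqConeAt [∀ n, Fintype (𝒜 n)] (σ : ∀ n, 𝒜 (n+1) → List (𝒜 n)) (n : ℕ) :
    Set (𝒜 n → ℝ) :=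
  ⋂ m : ℕ, (incidence (teleWFrom σ n (m+1))).mulVec '' { v | ∀ a, 0 ≤ v a }

/-- The dimension `c_n` of the intermediate letter frequency cone. -/
noncomputable def dimC [∀ n, Fintype (𝒜 n)] (σ : ∀ n, 𝒜 (n+1) → List (𝒜 n)) (n : ℕ) : ℕ :=
  Module.finrank ℝ (Submodule.span ℝ (freqConeAt σ n))

end Directive

section Prolong

variable {B : Type u} {𝒜 : ℕ → Type u}

/-- Alphabets of the prolonged directive sequence `⃖σ^τ`. -/
def prolongA (B : Type u) (𝒜 : ℕ → Type u) : ℕ → Type u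
  | 0 => B
  | n+1 => 𝒜 n

instance prolongAFintype [Fintype B] [∀ n, Fintype (𝒜 n)] :
    ∀ n, Fintype (prolongA B 𝒜 n)
  | 0 => inferInstanceAs (Fintype B)
  | n+1 => inferInstanceAs (Fintype (𝒜 n))

/-- The prolonged directive sequence `⃖σ^τ`. -/
def prolongSeq (τ : 𝒜 0 → List B) (σ : ∀ n, 𝒜 (n+1) → List (𝒜 n)) :
    ∀ n, prolongA B 𝒜 (n+1) → List (prolongA B 𝒜 n)
  | 0 => τ
  | n+1 => σ n

/-- The prolonged vector tower `⃖v^τ`. -/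
noncomputable def prolongTower [Fintype (𝒜 0)] (τ : 𝒜 0 → List B) (v : ∀ n, 𝒜 n → ℝ) :
    ∀ n, prolongA B 𝒜 n → ℝ
  | 0 => (incidence τ).mulVec (v 0)
  | n+1 => v n

end Prolong

/-- The morphism `τ_d : 𝒜_{d+1}* → 𝒜_d*`, `a_i ↦ a_i a_i` (i ≤ d), `a_{d+1} ↦ a_1 ⋯ a_d`. -/
def tauMap (d : ℕ) : Fin (d+1) → List (Fin d) := fun i =>
  if h : (i : ℕ) < d then [⟨i, h⟩, ⟨i, h⟩] else List.ofFn (fun j : Fin d => j)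

/-- Sizes of the alphabets of the alternating sequence `σ₂ ∘ τ₂ ∘ σ₃ ∘ τ₃ ∘ ⋯`. -/
def sz (n : ℕ) : ℕ := n / 2 + 2

/-- The alternating directive sequence `σ₂ ∘ τ₂ ∘ σ₃ ∘ τ₃ ∘ ⋯`. -/
def altSeq (σfam : ∀ d, Fin d → List (Fin d)) (n : ℕ) : Fin (sz (n+1)) → List (Fin (sz n)) :=
  fun a =>
    if h : n % 2 = 0 then
      σfam (sz n) (Fin.cast (by simp only [sz]; omega) a)
    else
      tauMap (sz n) (Fin.cast (by simp only [sz]; omega) a)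

/-! Recognizability says that a point `x ∈ X` is determined by `σ^ℤ(x)`, and that for
`0 < k < |σ(x₁)|` the word `T^k σ^ℤ(x)` is not of the form `σ^ℤ(x')` with `x' ∈ X`.
As `σ^ℳ(μ)` is the sum over `k` of the push-forwards of `μ` restricted to `{k < |σ(x₁)|}`
under `T^k ∘ σ^ℤ`, this gives `σ^ℳ(μ)(σ^ℤ(X ∩ S)) = μ(S)` for `μ ∈ ℳ(X)`, so `μ` is recovered
from `σ^ℳ(μ)`. The set `σ^ℤ(X ∩ S)` is Borel by the Lusin–Souslin theorem, since `σ^ℤ` is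
continuous and injective on `X`.
-/
instance ZWord.polishSpace [Countable A] : PolishSpace (ZWord A) := by
  let _ : TopologicalSpace A := ⊥
  have : DiscreteTopology A := ⟨rfl⟩
  have : PolishSpace A := inferInstance
  exact inferInstanceAs (PolishSpace (ℤ → A))

instance ZWord.borelSpace [Countable A] : BorelSpace (ZWord A) := by
  let _ : TopologicalSpace A := ⊥
  let _ : MeasurableSpace A := ⊤
  have : DiscreteTopology A := ⟨rfl⟩
  have : BorelSpace A := ⟨borel_eq_top_of_discrete.symm⟩
  exact inferInstanceAs (BorelSpace (ℤ → A))

instance SubAlph.countable [Countable A] (σ : A → List B) : Countable (SubAlph σ) :=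
  inferInstanceAs (Countable (Σ a : A, Fin (σ a).length))

theorem isLocallyConstant_of_forall_finset {C : Type*} {f : ZWord A → C}
    (h : ∀ x, ∃ F : Finset ℤ, ∀ y, (∀ i ∈ F, y i = x i) → f y = f x) :
    IsLocallyConstant f := by
  let _ : TopologicalSpace A := ⊥
  have : DiscreteTopology A := ⟨rfl⟩
  rw [IsLocallyConstant.iff_eventually_eq]
  intro x
  obtain ⟨F, hF⟩ := h x
  have hU : IsOpen ((F : Set ℤ).pi fun i => ({x i} : Set A)) :=
    isOpen_set_pi F.finite_toSet fun _ _ => isOpen_discrete _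
  filter_upwards [hU.mem_nhds fun _ _ => rfl] with y hy using hF y hy

theorem measurable_of_isLocallyConstant_apply [Countable A] {g : ZWord A → ZWord B}
    (hg : ∀ j, IsLocallyConstant fun x => g x j) : Measurable g :=
  @measurable_pi_lambda _ ℤ (fun _ => B) _ (fun _ => ⊤) g fun j s _ =>
    (hg j s).measurableSet

theorem measurable_shift [Countable A] : Measurable (shift : ZWord A → ZWord A) :=
  measurable_of_isLocallyConstant_apply fun j => isLocallyConstant_of_forall_finset fun _ =>
    ⟨{j + 1}, fun _ hy => hy _ (Finset.mem_singleton_self _)⟩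

theorem measurable_alphaZ [Countable A] (σ : A → List B) : Measurable (alphaZ σ) :=
  measurable_of_isLocallyConstant_apply fun j => isLocallyConstant_of_forall_finset fun _ =>
    ⟨{j}, fun _ hy => by simp only [alphaZ, hy j (Finset.mem_singleton_self _)]⟩

theorem alphaZ_iterate_shift (σ : A → List B) (k : ℕ) (y : ZWord (SubAlph σ)) :
    alphaZ σ (shift^[k] y) = shift^[k] (alphaZ σ y) :=
  Function.Semiconj.iterate_right (f := alphaZ σ) (ga := shift) (gb := shift) (fun _ => rfl) k y

theorem exists_le_and_lt_succ {f : ℤ → ℤ} (hf : ∀ n, f n < f (n + 1)) (j : ℤ) :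
    ∃ n, f n ≤ j ∧ j < f (n + 1) := by
  rcases le_total (f 0) j with h | h
  · induction j, h using Int.leInduction with
    | base => exact ⟨0, le_rfl, hf 0⟩
    | succ j _ ih =>
      obtain ⟨n, h1, h2⟩ := ih
      by_cases hj : j + 1 < f (n + 1)
      · exact ⟨n, by omega, hj⟩
      · exact ⟨n + 1, by omega, by have := hf (n + 1); omega⟩
  · induction j, h using Int.leInductionDown with
    | base => exact ⟨0, le_rfl, hf 0⟩
    | pred j _ ih =>
      obtain ⟨n, h1, h2⟩ := ih
      by_cases hj : f n ≤ j - 1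
      · exact ⟨n, hj, by omega⟩
      · exact ⟨n - 1, by have := hf (n - 1); simp only [sub_add_cancel] at this; omega,
          by simp only [sub_add_cancel]; omega⟩

theorem eq_of_le_and_lt_succ {f : ℤ → ℤ} (hf : Monotone f) {j n n' : ℤ}
    (h1 : f n ≤ j) (h2 : j < f (n + 1)) (h1' : f n' ≤ j) (h2' : j < f (n' + 1)) : n = n' := by
  by_contra hne
  rcases lt_or_gt_of_ne hne with h | h
  · have := hf (show n + 1 ≤ n' by omega); omega
  · have := hf (show n' + 1 ≤ n by omega); omega

theorem offset_succ (σ : A → List B) (x : ZWord A) (n : ℤ) :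
    offset σ x (n + 1) = offset σ x n + (σ (x n)).length := by
  have hsplit : ∀ (g : ℤ → ℤ) {a b c : ℤ}, a ≤ b → b ≤ c →
      ∑ i ∈ Finset.Ico a c, g i = ∑ i ∈ Finset.Ico a b, g i + ∑ i ∈ Finset.Ico b c, g i :=
    fun _ _ _ _ hab hbc => by
      rw [← Finset.sum_union (Finset.Ico_disjoint_Ico_consecutive _ _ _),
        Finset.Ico_union_Ico_eq_Ico hab hbc]
  have hsingle : ∀ m : ℤ, Finset.Ico m (m + 1) = {m} := fun m => by
    ext i; simp only [Finset.mem_Ico, Finset.mem_singleton]; omega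
  unfold offset
  rcases lt_trichotomy n 0 with h | rfl | h
  · rw [if_neg (by omega), if_neg (by omega), hsplit _ (le_of_lt (lt_add_one n)) (by omega),
      hsingle, Finset.sum_singleton]
    ring
  · have h0 := hsingle 0
    rw [zero_add] at h0
    simp [h0]
  · rw [if_pos (by omega), if_pos (by omega), hsplit _ (by omega : (1 : ℤ) ≤ n) (by omega),
      hsingle, Finset.sum_singleton]
    ring

theorem offset_monotone (σ : A → List B) (x : ZWord A) : Monotone (offset σ x) :=
  monotone_int_of_le_succ fun n => by rw [offset_succ]; omega

theorem offset_lt_offset_succ {σ : A → List B} (hσ : NonErasing σ) (x : ZWord A) (n : ℤ) :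
    offset σ x n < offset σ x (n + 1) := by
  have := List.length_pos_iff.mpr (hσ (x n))
  rw [offset_succ]; omega

theorem offset_congr (σ : A → List B) {x y : ZWord A} {n : ℤ}
    (h : ∀ i, min n 1 ≤ i → i < max n 1 → x i = y i) : offset σ x n = offset σ y n := by
  unfold offset
  split_ifs
  · congr 1
    exact Finset.sum_congr rfl fun i hi => by
      rw [Finset.mem_Ico] at hi; rw [h i (by omega) (by omega)]
  · congr 1
    exact Finset.sum_congr rfl fun i hi => by
      rw [Finset.mem_Ico] at hi; rw [h i (by omega) (by omega)]

theorem sigmaZ_apply_of_offset_le [Nonempty B] (σ : A → List B) (x : ZWord A) {j n : ℤ}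
    (h1 : offset σ x n ≤ j) (h2 : j < offset σ x (n + 1)) :
    sigmaZ σ x j = (σ (x n)).getD (j - offset σ x n).toNat (Classical.arbitrary B) := by
  have hspec := Classical.epsilon_spec (p := fun m => offset σ x m ≤ j ∧ j < offset σ x (m + 1))
    ⟨n, h1, h2⟩
  rw [sigmaZ, eq_of_le_and_lt_succ (offset_monotone σ x) hspec.1 hspec.2 h1 h2]

theorem isLocallyConstant_sigmaZ_apply [Nonempty B] {σ : A → List B} (hσ : NonErasing σ)
    (j : ℤ) : IsLocallyConstant fun x => sigmaZ σ x j := by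
  refine isLocallyConstant_of_forall_finset fun x => ?_
  obtain ⟨n, h1, h2⟩ := exists_le_and_lt_succ (offset_lt_offset_succ hσ x) j
  refine ⟨Finset.Icc (min n 1) (max n 1), fun y hy => ?_⟩
  have hxy : ∀ i, min n 1 ≤ i → i ≤ max n 1 → y i = x i := fun i hi hi' =>
    hy i (Finset.mem_Icc.mpr ⟨hi, hi'⟩)
  have hn : offset σ y n = offset σ x n :=
    offset_congr σ fun i hi hi' => hxy i hi (by omega)
  have hn' : offset σ y (n + 1) = offset σ x (n + 1) :=
    offset_congr σ fun i hi hi' => hxy i (by omega) (by omega)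
  rw [sigmaZ_apply_of_offset_le σ x h1 h2, sigmaZ_apply_of_offset_le σ y (hn ▸ h1) (hn' ▸ h2),
    hn, hxy n (by omega) (by omega)]

theorem measurable_sigmaZ [Countable A] [Nonempty B] {σ : A → List B} (hσ : NonErasing σ) :
    Measurable (sigmaZ σ) :=
  measurable_of_isLocallyConstant_apply (isLocallyConstant_sigmaZ_apply hσ)

theorem length_subdivMap (σ : A → List B) (a : A) : (subdivMap σ a).length = (σ a).length :=
  (List.length_map ..).trans (List.length_finRange ..)

theorem map_letterMap_subdivMap (σ : A → List B) (a : A) :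
    (subdivMap σ a).map (letterMap σ) = σ a :=
  (List.map_map ..).trans (List.map_get_finRange (σ a))

theorem NonErasing.subdivMap {σ : A → List B} (hσ : NonErasing σ) : NonErasing (subdivMap σ) :=
  fun a h => hσ a (List.length_eq_zero_iff.mp (length_subdivMap σ a ▸ congrArg List.length h))

theorem offset_subdivMap (σ : A → List B) : offset (subdivMap σ) = offset σ := by
  funext x n
  simp only [offset, length_subdivMap]

theorem letterMap_getD_subdivMap (σ : A → List B) (a : A) {i : ℕ} (hi : i < (σ a).length)
    (d : SubAlph σ) (d' : B) : letterMap σ ((subdivMap σ a).getD i d) = (σ a).getD i d' := by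
  rw [← List.getD_map (f := letterMap σ), map_letterMap_subdivMap, List.getD_eq_getElem _ _ hi,
    List.getD_eq_getElem _ _ hi]

theorem alphaZ_sigmaZ_subdivMap {σ : A → List B} [Nonempty B] [Nonempty (SubAlph σ)]
    (hσ : NonErasing σ) (x : ZWord A) :
    alphaZ σ (sigmaZ (subdivMap σ) x) = sigmaZ σ x := by
  funext j
  obtain ⟨n, h1, h2⟩ := exists_le_and_lt_succ (offset_lt_offset_succ hσ x) j
  have h1' : offset (subdivMap σ) x n ≤ j := by rwa [offset_subdivMap]
  have h2' : j < offset (subdivMap σ) x (n + 1) := by rwa [offset_subdivMap]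
  have hlt : (j - offset σ x n).toNat < (σ (x n)).length := by
    have := offset_succ σ x n; omega
  show letterMap σ (sigmaZ (subdivMap σ) x j) = sigmaZ σ x j
  rw [sigmaZ_apply_of_offset_le σ x h1 h2, sigmaZ_apply_of_offset_le (subdivMap σ) x h1' h2',
    offset_subdivMap]
  exact letterMap_getD_subdivMap σ (x n) hlt _ _

theorem transfer_eq_sum [Countable A] [Nonempty A] [Nonempty B] {σ : A → List B}
    (hσ : NonErasing σ) (μ : Measure (ZWord A)) :
    transfer σ μ = Measure.sum fun k : ℕ =>
      (μ.restrict {x | k < (σ (x 1)).length}).map fun x => shift^[k] (sigmaZ σ x) := by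
  have hne : Nonempty (SubAlph σ) :=
    ⟨⟨Classical.arbitrary A, ⟨0, List.length_pos_iff.mpr (hσ _)⟩⟩⟩
  rw [transfer, dif_pos hne, Measure.map_sum (measurable_alphaZ σ).aemeasurable]
  refine congrArg Measure.sum (funext fun k => ?_)
  have hΦ : Measurable fun x => shift^[k] (sigmaZ (subdivMap σ) x) :=
    (measurable_shift.iterate k).comp (measurable_sigmaZ hσ.subdivMap)
  rw [Measure.map_map (measurable_alphaZ σ) hΦ]
  congr 1
  funext x
  exact (alphaZ_iterate_shift σ k _).trans (congrArg _ (alphaZ_sigmaZ_subdivMap hσ x))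

theorem Recognizable.injOn_sigmaZ [Nonempty B] {σ : A → List B} (hσ : NonErasing σ)
    {X : Set (ZWord A)} (hrec : Recognizable σ X) : Set.InjOn (sigmaZ σ) X :=
  fun x hx y hy h =>
    (hrec x hx y hy 0 0 (List.length_pos_iff.mpr (hσ _)) (List.length_pos_iff.mpr (hσ _)) h).1

theorem Recognizable.iterate_shift_sigmaZ_mem_image_iff [Nonempty B] {σ : A → List B}
    (hσ : NonErasing σ) {X : Set (ZWord A)} (hrec : Recognizable σ X) {x : ZWord A} (hx : x ∈ X)
    {k : ℕ} (hk : k < (σ (x 1)).length) (S : Set (ZWord A)) :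
    shift^[k] (sigmaZ σ x) ∈ sigmaZ σ '' (X ∩ S) ↔ k = 0 ∧ x ∈ S := by
  constructor
  · rintro ⟨x', ⟨hx'X, hx'S⟩, hx'⟩
    obtain ⟨rfl, rfl⟩ := hrec x' hx'X x hx 0 k (List.length_pos_iff.mpr (hσ _)) hk hx'
    exact ⟨rfl, hx'S⟩
  · rintro ⟨rfl, hS⟩
    exact ⟨x, ⟨hx, hS⟩, rfl⟩

theorem transfer_image_sigmaZ_inter [Countable A] [Nonempty A] [Countable B] [Nonempty B]
    {σ : A → List B} (hσ : NonErasing σ) {X : Set (ZWord A)} (hXm : MeasurableSet X)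
    (hrec : Recognizable σ X) {μ : Measure (ZWord A)} (hμ : μ Xᶜ = 0) {S : Set (ZWord A)}
    (hS : MeasurableSet S) : transfer σ μ (sigmaZ σ '' (X ∩ S)) = μ S := by
  set V := sigmaZ σ '' (X ∩ S)
  have hV : MeasurableSet V := (hXm.inter hS).image_of_measurable_injOn (measurable_sigmaZ hσ)
    ((hrec.injOn_sigmaZ hσ).mono Set.inter_subset_left)
  have hlevel : ∀ k : ℕ, (fun x => shift^[k] (sigmaZ σ x)) ⁻¹' V ∩
      {x | k < (σ (x 1)).length} ∩ X = if k = 0 then S ∩ X else ∅ := by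
    intro k
    ext x
    have hmem := fun (hx : x ∈ X) (hk : k < (σ (x 1)).length) =>
      hrec.iterate_shift_sigmaZ_mem_image_iff hσ hx hk S
    simp only [Set.mem_inter_iff, Set.mem_preimage, Set.mem_ofPred_eq]
    split_ifs with hk
    · subst hk
      have hpos := List.length_pos_iff.mpr (hσ (x 1))
      constructor
      · rintro ⟨⟨hxV, -⟩, hx⟩
        exact ⟨((hmem hx hpos).mp hxV).2, hx⟩
      · rintro ⟨hxS, hx⟩
        exact ⟨⟨(hmem hx hpos).mpr ⟨rfl, hxS⟩, hpos⟩, hx⟩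
    · simp only [Set.mem_empty_iff_false, iff_false]
      rintro ⟨⟨hxV, hxk⟩, hx⟩
      exact hk ((hmem hx hxk).mp hxV).1
  calc transfer σ μ V
      = ∑' k : ℕ,
          μ ((fun x => shift^[k] (sigmaZ σ x)) ⁻¹' V ∩ {x | k < (σ (x 1)).length} ∩ X) := by
        rw [transfer_eq_sum hσ, Measure.sum_apply _ hV]
        refine tsum_congr fun k => ?_
        have hΦ : Measurable fun x => shift^[k] (sigmaZ σ x) :=
          (measurable_shift.iterate k).comp (measurable_sigmaZ hσ)
        rw [Measure.map_apply hΦ hV, Measure.restrict_apply (hΦ hV)]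
        exact (measure_inter_conull hμ).symm
    _ = ∑' k : ℕ, if k = 0 then μ S else 0 := by
        refine tsum_congr fun k => ?_
        rw [hlevel]
        split_ifs
        · exact measure_inter_conull hμ
        · exact measure_empty
    _ = μ S := tsum_ite_eq 0 _

/-- If a non-erasing morphism `σ : 𝒜* → ℬ*` is recognizable in a subshift
`X ⊆ 𝒜^ℤ`, then the measure transfer map `σ^ℳ_X : ℳ(X) → ℳ(σ(X))` is injective. -/
theorem measure_transfer_injective_of_recognizable {A : Type u} {B : Type v}
    [Fintype A] [Nonempty A] [Fintype B] [Nonempty B]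
    (σ : A → List B) (hσ : NonErasing σ)
    (X : Set (ZWord A)) (hX : IsSubshift X)
    (hrec : Recognizable σ X) :
    Set.InjOn (transfer σ) (measureCone X) := by
  intro μ hμ μ' hμ' h
  have hXm : MeasurableSet X := hX.2.1.measurableSet
  ext S hS
  rw [← transfer_image_sigmaZ_inter hσ hXm hrec hμ.2.2 hS, h,
    transfer_image_sigmaZ_inter hσ hXm hrec hμ'.2.2 hS]

end SAdicPaper
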